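/- arXiv:2501.01687 — 6 statements merged into one kernel-verified Lean document; each statement's English description precedes it below -/
import Mathlib

section
/- Let (u(t), v(t)) be a solution of the temporal predator–prey system with u(0) ≥ 0, v(0) ≥ 0, and set W(t) = u(t) + v(t)/σ and τ = min{1, δ}. Then W satisfies the differential inequality dW/dt ≤ 1 − τ W for all t ≥ 0, and consequently 0 ≤ W(t) ≤ 1/τ + (W(0) − 1/τ)·exp(−τ t) for all t ≥ 0; in particular the solutions are uniformly bounded. -/
/-!
Both equations have the form `x' = x * g t`, where the per-capita rate `g` is continuous at
every time at which `u, v ≥ 0`, because there `φ + v ≥ φ` and the denominator is at least `m`.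
From such a time a vanishing component stays zero (Grönwall) and a positive one stays positive
for a while, so by continuous induction the solution never leaves the closed quadrant. In
`W = u + v / σ` the predation terms cancel: `W' = u (1 - u) - δ v / σ`, and
`1 - τ W - W' = (1 - u)² + (1 - τ) u + (δ - τ) v / σ ≥ 0`. Grönwall's inequality for
`W' ≤ 1 - τ W` then gives the exponential bound.
-/

open Set Filter Topology Real

theorem eventually_nonneg_of_hasDerivAt_mul {x g : ℝ → ℝ} {s : ℝ}
    (hx : ∀ t ≥ s, HasDerivAt x (x t * g t) t) (hg : ContinuousWithinAt g (Ici s) s)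
    (hs : 0 ≤ x s) : ∀ᶠ t in 𝓝[≥] s, 0 ≤ x t := by
  rcases hs.eq_or_lt with hs | hs
  · have hbound : ∀ᶠ t in 𝓝[≥] s, |g t| < |g s| + 1 :=
      (continuous_abs.continuousAt.comp_continuousWithinAt hg).eventually_lt_const
        (lt_add_one _)
    obtain ⟨b, hsb, hb⟩ := mem_nhdsGE_iff_exists_Icc_subset.mp hbound
    have hzero := eq_zero_of_abs_deriv_le_mul_abs_self_of_eq_zero_right (K := |g s| + 1)
      (fun t ht => (hx t ht.1).continuousAt.continuousWithinAt)
      (fun t ht => (hx t ht.1).hasDerivWithinAt) hs.symm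
      (fun t ht => by
        rw [Real.norm_eq_abs, Real.norm_eq_abs, abs_mul, mul_comm]
        exact mul_le_mul_of_nonneg_right (hb (Ico_subset_Icc_self ht)).le (abs_nonneg _))
    filter_upwards [Icc_mem_nhdsGE hsb] with t ht using (hzero t ht).ge
  · filter_upwards [(hx s le_rfl).continuousAt.continuousWithinAt.eventually_const_lt hs]
      with t ht using ht.le

theorem nonneg_of_hasDerivAt_mul_of_hasDerivAt_mul {x y g k : ℝ → ℝ}
    (hx : ∀ t ≥ 0, HasDerivAt x (x t * g t) t) (hy : ∀ t ≥ 0, HasDerivAt y (y t * k t) t)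
    (hgk : ∀ t ≥ 0, 0 ≤ x t → 0 ≤ y t →
      ContinuousWithinAt g (Ici t) t ∧ ContinuousWithinAt k (Ici t) t)
    (hx0 : 0 ≤ x 0) (hy0 : 0 ≤ y 0) :
    ∀ t ≥ 0, 0 ≤ x t ∧ 0 ≤ y t := by
  intro T hT
  set S := {t | 0 ≤ x t ∧ 0 ≤ y t}
  have hcont : ContinuousOn (fun t => min (x t) (y t)) (Icc 0 T) := fun t ht =>
    ContinuousAt.continuousWithinAt <| (hx t ht.1).continuousAt.min (hy t ht.1).continuousAt
  have hclosed : IsClosed (S ∩ Icc 0 T) := by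
    convert hcont.preimage_isClosed_of_isClosed isClosed_Icc (isClosed_Ici (a := 0)) using 1
    ext t
    simp [S, and_comm]
  refine hclosed.Icc_subset_of_forall_mem_nhdsWithin ⟨hx0, hy0⟩ (fun s ⟨⟨hxs, hys⟩, hs, _⟩ => ?_)
    ⟨hT, le_rfl⟩
  obtain ⟨hg, hk⟩ := hgk s hs hxs hys
  exact nhdsWithin_mono _ Ioi_subset_Ici_self <|
    (eventually_nonneg_of_hasDerivAt_mul (fun t ht => hx t (hs.trans ht)) hg hxs).and
      (eventually_nonneg_of_hasDerivAt_mul (fun t ht => hy t (hs.trans ht)) hk hys)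

theorem le_of_hasDerivAt_le_one_sub_mul {f f' : ℝ → ℝ} {τ : ℝ} (hτ : τ ≠ 0)
    (hf : ∀ t ≥ 0, HasDerivAt f (f' t) t) (hbound : ∀ t ≥ 0, f' t ≤ 1 - τ * f t) :
    ∀ t ≥ 0, f t ≤ 1 / τ + (f 0 - 1 / τ) * exp (-τ * t) := by
  intro T hT
  have hgronwall := le_gronwallBound_of_liminf_deriv_right_le (δ := f 0) (K := -τ) (ε := 1)
    (fun t ht => (hf t ht.1).continuousAt.continuousWithinAt)
    (fun t ht _ hr => (hf t ht.1).hasDerivWithinAt.liminf_right_slope_le hr) le_rfl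
    (fun t ht => by linarith [hbound t ht.1]) T ⟨hT, le_rfl⟩
  rw [gronwallBound_of_K_ne_0 (neg_ne_zero.mpr hτ), sub_zero] at hgronwall
  convert hgronwall using 1
  field_simp
  ring

/-- The factor `f(v)` of the model; the predation term is `predationRate φ m h γ ω u v * u * v`. -/
noncomputable def fearFactor (φ ω v : ℝ) : ℝ := 1 - ω * v / (φ + v)

noncomputable def predationRate (φ m h γ ω u v : ℝ) : ℝ :=
  fearFactor φ ω v / (m + h * fearFactor φ ω v * u + γ * v)

theorem fearFactor_pos {φ ω v : ℝ} (hφ : 0 < φ) (hω : ω < 1) (hv : 0 ≤ v) :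
    0 < fearFactor φ ω v := by
  have hφv : 0 < φ + v := by positivity
  rw [fearFactor, sub_pos, div_lt_one hφv]
  nlinarith

theorem continuousAt_predationRate {φ m h γ ω : ℝ} {u v : ℝ → ℝ} {s : ℝ}
    (hφ : 0 < φ) (hm : 0 < m) (hh : 0 ≤ h) (hγ : 0 ≤ γ) (hω : ω < 1)
    (hu : ContinuousAt u s) (hv : ContinuousAt v s) (hus : 0 ≤ u s) (hvs : 0 ≤ v s) :
    ContinuousAt (fun t => predationRate φ m h γ ω (u t) (v t)) s := by
  have hF : ContinuousAt (fun t => fearFactor φ ω (v t)) s :=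
    continuousAt_const.sub <| (continuousAt_const.mul hv).div (continuousAt_const.add hv)
      (by positivity)
  have hD : 0 < m + h * fearFactor φ ω (v s) * u s + γ * v s := by
    have := fearFactor_pos hφ hω hvs
    positivity
  exact hF.div (by fun_prop) hD.ne'

theorem predatorPrey_nonneg {φ m h γ σ δ ω : ℝ}
    (hφ : 0 < φ) (hm : 0 < m) (hh : 0 ≤ h) (hγ : 0 ≤ γ) (hω : ω < 1) {u v : ℝ → ℝ}
    (hu : ∀ t ≥ (0 : ℝ), HasDerivAt u
      (u t * (1 - u t) -
        (1 - ω * v t / (φ + v t)) * u t * v t /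
          (m + h * (1 - ω * v t / (φ + v t)) * u t + γ * v t)) t)
    (hv : ∀ t ≥ (0 : ℝ), HasDerivAt v
      (σ * (1 - ω * v t / (φ + v t)) * u t * v t /
          (m + h * (1 - ω * v t / (φ + v t)) * u t + γ * v t) - δ * v t) t)
    (hu0 : 0 ≤ u 0) (hv0 : 0 ≤ v 0) :
    ∀ t ≥ 0, 0 ≤ u t ∧ 0 ≤ v t := by
  set p := fun t => predationRate φ m h γ ω (u t) (v t)
  refine nonneg_of_hasDerivAt_mul_of_hasDerivAt_mul (g := fun t => 1 - u t - p t * v t)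
    (k := fun t => σ * p t * u t - δ) (fun t ht => ?_) (fun t ht => ?_) (fun t ht hut hvt => ?_)
    hu0 hv0
  · convert hu t ht using 1; simp only [p, predationRate, fearFactor]; ring
  · convert hv t ht using 1; simp only [p, predationRate, fearFactor]; ring
  have hpt : ContinuousAt p t := continuousAt_predationRate hφ hm hh hγ hω
    (hu t ht).continuousAt (hv t ht).continuousAt hut hvt
  have hut' := (hu t ht).continuousAt
  have hvt' := (hv t ht).continuousAt
  constructor <;> apply ContinuousAt.continuousWithinAt <;> fun_prop

theorem logistic_sub_mul_le_one_sub_mul {u w τ δ : ℝ} (hu : 0 ≤ u) (hw : 0 ≤ w)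
    (hτ1 : τ ≤ 1) (hτδ : τ ≤ δ) : u * (1 - u) - δ * w ≤ 1 - τ * (u + w) := by
  nlinarith [sq_nonneg (1 - u), mul_nonneg (sub_nonneg.2 hτ1) hu,
    mul_nonneg (sub_nonneg.2 hτδ) hw]

theorem temporal_solutions_uniformly_bounded_general
    (φ m h γ σ δ ω : ℝ)
    (hφ : 0 < φ) (hm : 0 < m) (hh : 0 < h) (hγ : 0 < γ) (hσ : 0 < σ) (hδ : 0 < δ)
    (hω1 : ω < 1)
    (u v : ℝ → ℝ)
    (hu : ∀ t ≥ (0 : ℝ), HasDerivAt u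
      (u t * (1 - u t) -
        (1 - ω * v t / (φ + v t)) * u t * v t /
          (m + h * (1 - ω * v t / (φ + v t)) * u t + γ * v t)) t)
    (hv : ∀ t ≥ (0 : ℝ), HasDerivAt v
      (σ * (1 - ω * v t / (φ + v t)) * u t * v t /
          (m + h * (1 - ω * v t / (φ + v t)) * u t + γ * v t) - δ * v t) t)
    (hu0 : 0 ≤ u 0) (hv0 : 0 ≤ v 0)
    (W : ℝ → ℝ) (hW : W = fun t => u t + v t / σ)
    (τ : ℝ) (hτ : τ = min 1 δ) :
    ∀ t ≥ (0 : ℝ),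
      deriv W t ≤ 1 - τ * W t ∧
      0 ≤ W t ∧
      W t ≤ 1 / τ + (W 0 - 1 / τ) * Real.exp (-τ * t) := by
  subst hW hτ
  have hnonneg := predatorPrey_nonneg hφ hm hh.le hγ.le hω1 hu hv hu0 hv0
  have hW : ∀ t ≥ (0 : ℝ), HasDerivAt (fun t => u t + v t / σ)
      (u t * (1 - u t) - δ * (v t / σ)) t := fun t ht =>
    ((hu t ht).add ((hv t ht).div_const σ)).congr_deriv (by field_simp; ring)
  have hbound : ∀ t ≥ (0 : ℝ), u t * (1 - u t) - δ * (v t / σ) ≤ 1 - min 1 δ * (u t + v t / σ) :=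
    fun t ht => logistic_sub_mul_le_one_sub_mul (hnonneg t ht).1
      (div_nonneg (hnonneg t ht).2 hσ.le) (min_le_left _ _) (min_le_right _ _)
  intro t ht
  refine ⟨(hW t ht).deriv ▸ hbound t ht,
    add_nonneg (hnonneg t ht).1 (div_nonneg (hnonneg t ht).2 hσ.le), ?_⟩
  exact le_of_hasDerivAt_le_one_sub_mul (lt_min one_pos hδ).ne' hW hbound t ht

/-- Setting `W(t) = u(t) + v(t)/σ` and `τ = min{1, δ}`, any solution of the
temporal predator–prey system with non-negative initial data satisfies the
differential inequality `dW/dt ≤ 1 − τ W` for all `t ≥ 0`, and consequently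
`0 ≤ W(t) ≤ 1/τ + (W(0) − 1/τ)·exp(−τ t)` for all `t ≥ 0`; in particular the
solutions are uniformly bounded. -/
theorem temporal_solutions_uniformly_bounded
    (φ m h γ σ δ ω : ℝ)
    (hφ : 0 < φ) (hm : 0 < m) (hh : 0 < h) (hγ : 0 < γ) (hσ : 0 < σ) (hδ : 0 < δ)
    (hω0 : 0 ≤ ω) (hω1 : ω < 1)
    (u v : ℝ → ℝ)
    (hu : ∀ t ≥ (0 : ℝ), HasDerivAt u
      (u t * (1 - u t) -
        (1 - ω * v t / (φ + v t)) * u t * v t /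
          (m + h * (1 - ω * v t / (φ + v t)) * u t + γ * v t)) t)
    (hv : ∀ t ≥ (0 : ℝ), HasDerivAt v
      (σ * (1 - ω * v t / (φ + v t)) * u t * v t /
          (m + h * (1 - ω * v t / (φ + v t)) * u t + γ * v t) - δ * v t) t)
    (hu0 : 0 ≤ u 0) (hv0 : 0 ≤ v 0)
    (W : ℝ → ℝ) (hW : W = fun t => u t + v t / σ)
    (τ : ℝ) (hτ : τ = min 1 δ) :
    ∀ t ≥ (0 : ℝ),
      deriv W t ≤ 1 - τ * W t ∧
      0 ≤ W t ∧
      W t ≤ 1 / τ + (W 0 - 1 / τ) * Real.exp (-τ * t) :=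
  temporal_solutions_uniformly_bounded_general φ m h γ σ δ ω hφ hm hh hγ hσ hδ hω1 u v hu hv hu0 hv0
    W hW τ hτ
end

section
/- Assume σ > δ(m + h). Then the quartic g(v) = A₁v⁴ + A₂v³ + A₃v² + A₄v + A₅, with A₁ = σδγ², A₂ = (σ−hδ)²(1−ω)² − σγ(1−ω)(σ−hδ) + 2σδγ(m+γφ), A₃ = 2φ(1−ω)(σ−hδ)² − σ(σ−hδ)[m(1−ω)+γφ(2−ω)] + σδ[(m+γφ)² + 2mφγ], A₄ = φ²(σ−hδ)² − σφ(σ−hδ)[γφ+m(2−ω)] + 2mσφδ(m+γφ), and A₅ = σmφ²[δ(m+h)−σ], satisfies g(0) < 0 and g(v) → +∞ as v → ∞; hence g has at least one root v* > 0, and the corresponding prey value u* = δ(m + γv*)/[(σ − hδ)·f(v*)] is strictly positive. -/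
open Filter

lemma quartic_tendsto (A₁ A₂ A₃ A₄ A₅ : ℝ) (h1 : 0 < A₁) :
    Tendsto (fun v : ℝ => A₁ * v ^ 4 + A₂ * v ^ 3 + A₃ * v ^ 2 + A₄ * v + A₅) atTop atTop := by
  have hdeg4 : (Polynomial.C A₁ * Polynomial.X ^ 4 + Polynomial.C A₂ * Polynomial.X ^ 3
      + Polynomial.C A₃ * Polynomial.X ^ 2 + Polynomial.C A₄ * Polynomial.X
      + Polynomial.C A₅).degree = 4 := by
    compute_degree! <;> exact h1.ne'
  have h := Polynomial.tendsto_atTop_of_leadingCoeff_nonneg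
    (P := Polynomial.C A₁ * Polynomial.X ^ 4 + Polynomial.C A₂ * Polynomial.X ^ 3
      + Polynomial.C A₃ * Polynomial.X ^ 2 + Polynomial.C A₄ * Polynomial.X + Polynomial.C A₅)
    (hdeg := by rw [hdeg4]; norm_num)
  have hnd : (Polynomial.C A₁ * Polynomial.X ^ 4 + Polynomial.C A₂ * Polynomial.X ^ 3
      + Polynomial.C A₃ * Polynomial.X ^ 2 + Polynomial.C A₄ * Polynomial.X
      + Polynomial.C A₅).natDegree = 4 :=
    Polynomial.natDegree_eq_of_degree_eq_some hdeg4
  have hlc : (Polynomial.C A₁ * Polynomial.X ^ 4 + Polynomial.C A₂ * Polynomial.X ^ 3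
      + Polynomial.C A₃ * Polynomial.X ^ 2 + Polynomial.C A₄ * Polynomial.X
      + Polynomial.C A₅).leadingCoeff = A₁ := by
    rw [Polynomial.leadingCoeff, hnd]
    simp [Polynomial.coeff_add, Polynomial.coeff_C_mul]
  have h' := h (by rw [hlc]; exact h1.le)
  have : (fun v : ℝ => A₁ * v ^ 4 + A₂ * v ^ 3 + A₃ * v ^ 2 + A₄ * v + A₅)
      = fun v => Polynomial.eval v (Polynomial.C A₁ * Polynomial.X ^ 4
        + Polynomial.C A₂ * Polynomial.X ^ 3 + Polynomial.C A₃ * Polynomial.X ^ 2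
        + Polynomial.C A₄ * Polynomial.X + Polynomial.C A₅) := by
    funext v; simp
  rw [this]
  exact h'

/-- Under `σ > δ(m+h)`, the quartic `g` determining interior equilibria satisfies
`g(0) < 0` and `g(v) → +∞` as `v → ∞`, hence it has a positive root `v*`, and the
corresponding prey value `u* = δ(m + γ v*)/[(σ − hδ) f(v*)]` is strictly positive. -/
theorem quartic_has_positive_root
    (φ m h γ σ δ ω : ℝ)
    (hφ : 0 < φ) (hm : 0 < m) (hh : 0 < h) (hγ : 0 < γ) (hσ : 0 < σ) (hδ : 0 < δ)
    (hω0 : 0 ≤ ω) (hω1 : ω < 1)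
    (hcond : σ > δ * (m + h))
    (A₁ A₂ A₃ A₄ A₅ : ℝ)
    (hA₁ : A₁ = σ * δ * γ ^ 2)
    (hA₂ : A₂ = (σ - h * δ) ^ 2 * (1 - ω) ^ 2 - σ * γ * (1 - ω) * (σ - h * δ)
      + 2 * σ * δ * γ * (m + γ * φ))
    (hA₃ : A₃ = 2 * φ * (1 - ω) * (σ - h * δ) ^ 2
      - σ * (σ - h * δ) * (m * (1 - ω) + γ * φ * (2 - ω))
      + σ * δ * ((m + γ * φ) ^ 2 + 2 * m * φ * γ))
    (hA₄ : A₄ = φ ^ 2 * (σ - h * δ) ^ 2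
      - σ * φ * (σ - h * δ) * (γ * φ + m * (2 - ω))
      + 2 * m * σ * φ * δ * (m + γ * φ))
    (hA₅ : A₅ = σ * m * φ ^ 2 * (δ * (m + h) - σ))
    (g : ℝ → ℝ)
    (hg : g = fun v => A₁ * v ^ 4 + A₂ * v ^ 3 + A₃ * v ^ 2 + A₄ * v + A₅) :
    g 0 < 0 ∧ Tendsto g atTop atTop ∧
    ∃ vstar : ℝ, 0 < vstar ∧ g vstar = 0 ∧
      0 < δ * (m + γ * vstar) /
        ((σ - h * δ) * (1 - ω * vstar / (φ + vstar))) := by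
  have hA₅neg : A₅ < 0 := by
    rw [hA₅]
    have : δ * (m + h) - σ < 0 := by linarith
    have hpos : 0 < σ * m * φ ^ 2 := by positivity
    exact mul_neg_of_pos_of_neg hpos this
  have hg0 : g 0 < 0 := by simp [hg, hA₅neg]
  have hA₁pos : 0 < A₁ := by rw [hA₁]; positivity
  have htend : Tendsto g atTop atTop := by
    rw [hg]; exact quartic_tendsto A₁ A₂ A₃ A₄ A₅ hA₁pos
  refine ⟨hg0, htend, ?_⟩
  obtain ⟨b, hgb, hb0⟩ := ((htend.eventually_ge_atTop 1).and (eventually_ge_atTop 0)).exists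
  have hcont : ContinuousOn g (Set.Icc 0 b) := by
    rw [hg]; fun_prop
  have hsub : Set.Ioc (g 0) (g b) ⊆ g '' Set.Ioc 0 b :=
    intermediate_value_Ioc hb0 hcont
  have h0mem : (0 : ℝ) ∈ Set.Ioc (g 0) (g b) := ⟨hg0, by linarith⟩
  obtain ⟨v, hv, hgv⟩ := hsub h0mem
  refine ⟨v, hv.1, hgv, ?_⟩
  have hσhδ : 0 < σ - h * δ := by
    have hexp : δ * (m + h) = δ * m + h * δ := by ring
    have := mul_pos hδ hm
    linarith
  have hφv : 0 < φ + v := by linarith [hv.1]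
  have hfrac : ω * v / (φ + v) < 1 := by
    rw [div_lt_one hφv]
    nlinarith [hv.1]
  have hden : 0 < (σ - h * δ) * (1 - ω * v / (φ + v)) := by
    apply mul_pos hσhδ; linarith
  have hnum : 0 < δ * (m + γ * v) := by
    apply mul_pos hδ; nlinarith [hv.1]
  exact div_pos hnum hden
end

section
/- For all real u ∈ [0,1] and v ≥ 0, and parameters φ, m, h, γ, σ, δ > 0 with 0 ≤ ω < 1, the predator growth term satisfies σ·f(v)·u·v/(m + h·f(v)·u + γ·v) − δ·v ≤ v·(σ − δm − δγv)/(m + γv); in particular the right-hand side is strictly negative whenever v > (σ − mδ)/(γδ) and v > 0, so the predator net growth rate is negative for prey density at most 1 and predator density exceeding (σ − mδ)/(γδ). -/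
/-- Pointwise bound on the predator kinetics: for `0 ≤ u ≤ 1` and `v ≥ 0`,
`σ f(v) u v/(m + h f(v) u + γ v) − δv ≤ v(σ − δm − δγv)/(m + γv)`, and the
right-hand side is strictly negative whenever `v > (σ − mδ)/(γδ)` and `v > 0`. -/
theorem predator_kinetics_upper_bound
    (φ m h γ σ δ ω : ℝ)
    (hφ : 0 < φ) (hm : 0 < m) (hh : 0 < h) (hγ : 0 < γ) (hσ : 0 < σ) (hδ : 0 < δ)
    (hω0 : 0 ≤ ω) (hω1 : ω < 1) :
    (∀ u v : ℝ, 0 ≤ u → u ≤ 1 → 0 ≤ v →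
      σ * (1 - ω * v / (φ + v)) * u * v /
          (m + h * (1 - ω * v / (φ + v)) * u + γ * v) - δ * v ≤
        v * (σ - δ * m - δ * γ * v) / (m + γ * v)) ∧
    (∀ v : ℝ, 0 < v → v > (σ - m * δ) / (γ * δ) →
      v * (σ - δ * m - δ * γ * v) / (m + γ * v) < 0) := by
  constructor
  · intro u v hu0 hu1 hv0
    set F : ℝ := 1 - ω * v / (φ + v) with hF
    have hφv : 0 < φ + v := by linarith
    have hfrac0 : 0 ≤ ω * v / (φ + v) := by positivity
    have hfrac1 : ω * v / (φ + v) ≤ 1 := by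
      rw [div_le_one hφv]
      nlinarith [mul_le_mul_of_nonneg_right hω1.le hv0]
    have hF0 : 0 ≤ F := by simp [hF]; linarith
    have hF1 : F ≤ 1 := by simp [hF]; linarith
    have hden : 0 < m + γ * v := by positivity
    have hden2 : m + γ * v ≤ m + h * F * u + γ * v := by nlinarith [mul_nonneg (mul_nonneg hh.le hF0) hu0]
    have hFu : F * u ≤ 1 := mul_le_one₀ hF1 hu0 hu1
    have hnum : σ * F * u * v ≤ σ * v := by nlinarith [mul_le_mul_of_nonneg_left hFu (mul_nonneg hσ.le hv0)]
    have h1 : σ * F * u * v / (m + h * F * u + γ * v) ≤ σ * v / (m + γ * v) := by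
      apply div_le_div₀ (by positivity) hnum hden hden2
    have h2 : σ * v / (m + γ * v) - δ * v = v * (σ - δ * m - δ * γ * v) / (m + γ * v) := by
      field_simp
      ring
    linarith
  · intro v hv hgt
    have hγδ : 0 < γ * δ := by positivity
    have h1 : γ * δ * v > σ - m * δ := by
      calc γ * δ * v > γ * δ * ((σ - m * δ) / (γ * δ)) := by
            exact (mul_lt_mul_iff_right₀ hγδ).2 hgt
        _ = σ - m * δ := by field_simp
    have hden : 0 < m + γ * v := by positivity
    apply div_neg_of_neg_of_pos _ hden
    nlinarith
end

section
/- Let G_v > 0 and 0 < a ≤ 1 be given, and let B₁ = φ(m+h) + γG_v² and B₂ = (m + γφ) + h(1−ω). Then for all u with a ≤ u ≤ 1 and all v with 0 ≤ v ≤ G_v, the per-capita predator gain satisfies σ·f(v)·u/(m + h·f(v)·u + γ·v) ≥ σφa/(B₁ + B₂v), where f(v) = 1 − ωv/(φ+v), i.e. f(v)u = u(φ + (1−ω)v)/(φ+v). -/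
set_option maxHeartbeats 2000000


/-- Lower bound on the per-capita predator gain: for prey density `u ∈ [a,1]`
and predator density `v ∈ [0, G_v]`, with `B₁ = φ(m+h) + γG_v²` and
`B₂ = (m+γφ) + h(1−ω)`, one has
`σ f(v) u/(m + h f(v) u + γv) ≥ σφa/(B₁ + B₂v)`, where
`f(v) = 1 − ωv/(φ+v)`, i.e. `f(v)u = u(φ + (1−ω)v)/(φ+v)`. -/
theorem per_capita_predator_gain_lower_bound
    (φ m h γ σ δ ω : ℝ)
    (hφ : 0 < φ) (hm : 0 < m) (hh : 0 < h) (hγ : 0 < γ) (hσ : 0 < σ) (hδ : 0 < δ)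
    (hω0 : 0 ≤ ω) (hω1 : ω < 1)
    (Gv a : ℝ) (hGv : 0 < Gv) (ha0 : 0 < a) (ha1 : a ≤ 1)
    (B₁ B₂ : ℝ)
    (hB₁ : B₁ = φ * (m + h) + γ * Gv ^ 2)
    (hB₂ : B₂ = (m + γ * φ) + h * (1 - ω)) :
    ∀ u v : ℝ, a ≤ u → u ≤ 1 → 0 ≤ v → v ≤ Gv →
      ((1 - ω * v / (φ + v)) * u = u * (φ + (1 - ω) * v) / (φ + v)) ∧
      σ * (1 - ω * v / (φ + v)) * u /
          (m + h * (1 - ω * v / (φ + v)) * u + γ * v) ≥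
        σ * φ * a / (B₁ + B₂ * v) := by
  intro u v hau hu1 hv0 hvG
  have hφv : 0 < φ + v := by linarith
  have heq : (1 - ω * v / (φ + v)) * u = u * (φ + (1 - ω) * v) / (φ + v) := by
    field_simp; ring
  refine ⟨heq, ?_⟩
  have hu0 : 0 < u := lt_of_lt_of_le ha0 hau
  have hω' : (0:ℝ) ≤ 1 - ω := by linarith
  have hX : 0 < φ + (1 - ω) * v := by nlinarith [mul_nonneg hω' hv0]
  have hnum : 0 < u * (φ + (1 - ω) * v) := mul_pos hu0 hX
  have hfu : 0 ≤ u * (φ + (1 - ω) * v) / (φ + v) := div_nonneg hnum.le hφv.le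
  have hD : 0 < m + h * (1 - ω * v / (φ + v)) * u + γ * v := by
    rw [mul_assoc, heq]
    nlinarith [mul_nonneg hγ.le hv0, mul_nonneg hh.le hfu]
  have hB : 0 < B₁ + B₂ * v := by nlinarith [mul_nonneg hv0 (by nlinarith : (0:ℝ) ≤ B₂)]
  rw [ge_iff_le, div_le_div_iff₀ hB hD]
  rw [show σ * (1 - ω * v / (φ + v)) * u = σ * ((1 - ω * v / (φ + v)) * u) from by ring,
      show h * (1 - ω * v / (φ + v)) * u = h * ((1 - ω * v / (φ + v)) * u) from by ring,
      heq]
  have h1 : a * φ ≤ u * (φ + (1 - ω) * v) := by nlinarith [mul_nonneg hω' hv0]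
  have hx : h * (u * (φ + (1 - ω) * v)) ≤ h * (φ + (1 - ω) * v) := by
    nlinarith [mul_nonneg (mul_nonneg hh.le hX.le) (by linarith : (0:ℝ) ≤ 1 - u)]
  have h2 : m * (φ + v) + h * (u * (φ + (1 - ω) * v)) + γ * v * (φ + v) ≤ B₁ + B₂ * v := by
    have hv2 : γ * (v * v) ≤ γ * (Gv * Gv) := by
      have : v * v ≤ Gv * Gv := mul_le_mul hvG hvG hv0 hGv.le
      exact mul_le_mul_of_nonneg_left this hγ.le
    subst hB₁ hB₂
    ring_nf
    ring_nf at hx hv2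
    linarith
  have key : σ * φ * a * (m * (φ + v) + h * (u * (φ + (1 - ω) * v)) + γ * v * (φ + v)) ≤
      σ * (u * (φ + (1 - ω) * v)) * (B₁ + B₂ * v) := by
    calc σ * φ * a * (m * (φ + v) + h * (u * (φ + (1 - ω) * v)) + γ * v * (φ + v))
        ≤ σ * φ * a * (B₁ + B₂ * v) := by
          apply mul_le_mul_of_nonneg_left h2; positivity
      _ ≤ σ * (u * (φ + (1 - ω) * v)) * (B₁ + B₂ * v) := by
          apply mul_le_mul_of_nonneg_right _ hB.le
          calc σ * φ * a = σ * (a * φ) := by ring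
            _ ≤ σ * (u * (φ + (1 - ω) * v)) := mul_le_mul_of_nonneg_left h1 hσ.le
  have hy : u * (φ + (1 - ω) * v) / (φ + v) * (φ + v) = u * (φ + (1 - ω) * v) :=
    div_mul_cancel₀ _ hφv.ne'
  rw [show σ * (u * (φ + (1 - ω) * v) / (φ + v)) * (B₁ + B₂ * v) =
      σ * (u * (φ + (1 - ω) * v)) * (B₁ + B₂ * v) / (φ + v) from by ring,
    le_div_iff₀ hφv]
  calc σ * φ * a * (m + h * (u * (φ + (1 - ω) * v) / (φ + v)) + γ * v) * (φ + v)
      = σ * φ * a * (m * (φ + v) + h * (u * (φ + (1 - ω) * v) / (φ + v) * (φ + v))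
          + γ * v * (φ + v)) := by ring
    _ = σ * φ * a * (m * (φ + v) + h * (u * (φ + (1 - ω) * v)) + γ * v * (φ + v)) := by
          rw [hy]
    _ ≤ σ * (u * (φ + (1 - ω) * v)) * (B₁ + B₂ * v) := key
end

section
/- Let a₁₁, a₁₂, a₂₁, a₂₂, d₁, d₂, u*, v*, η be real numbers with c := a₂₁u* ≠ 0, and define β = d₂a₁₁ + d₁a₂₂ + a₁₂ηv*, Δ = a₁₁a₂₂ − a₁₂a₂₁, ρ₁ = cβ + 2ηu*v*Δ, and ρ₂ = β² − 4d₁d₂Δ. Assume ρ₁² ≥ c²ρ₂. Then the quantity ξ_c = [ρ₁ − √(ρ₁² − c²ρ₂)]/c² satisfies the critical Turing equation 4(d₁d₂ + ξ_c·ηu*v*)·Δ = (β − c·ξ_c)², i.e. a₁₁a₂₂ − a₁₂a₂₁ = [(d₂a₁₁ + d₁a₂₂) + (a₁₂ηv* − a₂₁ξ_c u*)]²/[4(d₁d₂ + ξ_c ηu*v*)]. Moreover, if in addition ρ₁ > 0 and ρ₂ > 0, then ξ_c > 0. -/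
/-- The critical predator-taxis threshold `ξ_c = [ρ₁ − √(ρ₁² − c²ρ₂)]/c²`, with
`c = a₂₁u* ≠ 0`, `β = d₂a₁₁ + d₁a₂₂ + a₁₂ηv*`, `Δ = a₁₁a₂₂ − a₁₂a₂₁`,
`ρ₁ = cβ + 2ηu*v*Δ`, `ρ₂ = β² − 4d₁d₂Δ`, satisfies the critical Turing
equation `4(d₁d₂ + ξ_c ηu*v*)Δ = (β − cξ_c)²`; moreover `ξ_c > 0` when
`ρ₁ > 0` and `ρ₂ > 0`. -/
theorem critical_predator_taxis
    (a₁₁ a₁₂ a₂₁ a₂₂ d₁ d₂ ustar vstar η : ℝ)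
    (c β Δ ρ₁ ρ₂ : ℝ)
    (hc_def : c = a₂₁ * ustar) (hc : c ≠ 0)
    (hβ : β = d₂ * a₁₁ + d₁ * a₂₂ + a₁₂ * η * vstar)
    (hΔ : Δ = a₁₁ * a₂₂ - a₁₂ * a₂₁)
    (hρ₁ : ρ₁ = c * β + 2 * η * ustar * vstar * Δ)
    (hρ₂ : ρ₂ = β ^ 2 - 4 * d₁ * d₂ * Δ)
    (hdisc : ρ₁ ^ 2 ≥ c ^ 2 * ρ₂)
    (ξc : ℝ) (hξc : ξc = (ρ₁ - Real.sqrt (ρ₁ ^ 2 - c ^ 2 * ρ₂)) / c ^ 2) :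
    4 * (d₁ * d₂ + ξc * η * ustar * vstar) * Δ = (β - c * ξc) ^ 2 ∧
    (0 < ρ₁ → 0 < ρ₂ → 0 < ξc) := by
  have hc2 : (0:ℝ) < c ^ 2 := by positivity
  set s := Real.sqrt (ρ₁ ^ 2 - c ^ 2 * ρ₂) with hs_def
  have hs0 : 0 ≤ s := Real.sqrt_nonneg _
  have hs2 : s ^ 2 = ρ₁ ^ 2 - c ^ 2 * ρ₂ := Real.sq_sqrt (by linarith)
  have hξ : ξc * c ^ 2 = ρ₁ - s := by
    rw [hξc]; field_simp
  have h4 : (ξc * c ^ 2) ^ 2 = (ρ₁ - s) ^ 2 := by rw [hξ]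
  have key' : c ^ 2 * (c ^ 2 * ξc ^ 2 - 2 * ρ₁ * ξc + ρ₂) = c ^ 2 * 0 := by
    linear_combination h4 - 2 * ρ₁ * hξ + hs2
  have key : c ^ 2 * ξc ^ 2 - 2 * ρ₁ * ξc + ρ₂ = 0 :=
    mul_left_cancel₀ hc2.ne' key'
  constructor
  · linear_combination -key - 2 * ξc * hρ₁ + hρ₂
  · intro h1 h2
    have hlt : s < ρ₁ := by nlinarith [hs2, mul_pos hc2 h2]
    rw [hξc]
    exact div_pos (by linarith) hc2
end

section
/- (Taxis-driven stability switch.) Let a₁₁, a₁₂, a₂₁, a₂₂, d₁, d₂, u*, v*, η be real numbers with a₁₁ + a₂₂ < 0, Δ := a₁₁a₂₂ − a₁₂a₂₁ > 0, c := a₂₁u* > 0, η ≥ 0, u*, v*, d₁, d₂ > 0, β := d₂a₁₁ + d₁a₂₂ + a₁₂ηv* > 0, and ρ₂ := β² − 4d₁d₂Δ > 0 (i.e. β > 2√(d₁d₂Δ)). Set ρ₁ = cβ + 2ηu*v*Δ and ξ_c = [ρ₁ − √(ρ₁² − c²ρ₂)]/c², and for ξ ≥ 0 put ζ₂(x) =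 (d₁d₂ + ξηu*v*)x² − (β − cξ)x + Δ. Then: (i) for every ξ with 0 ≤ ξ < ξ_c there exists x > 0 with ζ₂(x) < 0 (Turing instability); (ii) for every ξ > ξ_c one has ζ₂(x) > 0 for all x ≥ 0, so the coexistence steady state is linearly stable against heterogeneous perturbations. -/
set_option maxHeartbeats 1000000


/-- Taxis-driven stability switch: with the kinetics stable (`a₁₁ + a₂₂ < 0`,
`Δ = a₁₁a₂₂ − a₁₂a₂₁ > 0`), `c = a₂₁u* > 0`, `β = d₂a₁₁ + d₁a₂₂ + a₁₂ηv* > 0`,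
and `ρ₂ = β² − 4d₁d₂Δ > 0`, setting `ρ₁ = cβ + 2ηu*v*Δ` and
`ξ_c = [ρ₁ − √(ρ₁² − c²ρ₂)]/c²`, the dispersion function
`ζ₂(ξ, x) = (d₁d₂ + ξηu*v*)x² − (β − cξ)x + Δ` satisfies:
(i) for every `0 ≤ ξ < ξ_c` there is `x > 0` with `ζ₂(ξ, x) < 0` (Turing
instability); (ii) for every `ξ > ξ_c`, `ζ₂(ξ, x) > 0` for all `x ≥ 0`
(linear stability against heterogeneous perturbations). -/
theorem taxis_stability_switch
    (a₁₁ a₁₂ a₂₁ a₂₂ d₁ d₂ ustar vstar η : ℝ)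
    (c β Δ ρ₁ ρ₂ : ℝ)
    (htr : a₁₁ + a₂₂ < 0)
    (hΔ_def : Δ = a₁₁ * a₂₂ - a₁₂ * a₂₁) (hΔ : 0 < Δ)
    (hc_def : c = a₂₁ * ustar) (hc : 0 < c)
    (hη : 0 ≤ η) (hu : 0 < ustar) (hv : 0 < vstar) (hd₁ : 0 < d₁) (hd₂ : 0 < d₂)
    (hβ_def : β = d₂ * a₁₁ + d₁ * a₂₂ + a₁₂ * η * vstar) (hβ : 0 < β)
    (hρ₁ : ρ₁ = c * β + 2 * η * ustar * vstar * Δ)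
    (hρ₂_def : ρ₂ = β ^ 2 - 4 * d₁ * d₂ * Δ) (hρ₂ : 0 < ρ₂)
    (ξc : ℝ) (hξc : ξc = (ρ₁ - Real.sqrt (ρ₁ ^ 2 - c ^ 2 * ρ₂)) / c ^ 2)
    (ζ₂ : ℝ → ℝ → ℝ)
    (hζ₂ : ζ₂ = fun ξ x =>
      (d₁ * d₂ + ξ * η * ustar * vstar) * x ^ 2 - (β - c * ξ) * x + Δ) :
    (∀ ξ : ℝ, 0 ≤ ξ → ξ < ξc → ∃ x : ℝ, 0 < x ∧ ζ₂ ξ x < 0) ∧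
    (∀ ξ : ℝ, ξc < ξ → ∀ x : ℝ, 0 ≤ x → 0 < ζ₂ ξ x) := by
  subst hζ₂
  have huv : 0 < ustar * vstar := mul_pos hu hv
  -- discriminant of g is positive
  have hD : 0 < ρ₁ ^ 2 - c ^ 2 * ρ₂ := by
    have h1 : 0 < c * β * (η * ustar * vstar * Δ) + (η * ustar * vstar * Δ) ^ 2
        + c ^ 2 * (d₁ * d₂ * Δ) := by positivity
    nlinarith [mul_pos hc hβ, mul_pos (mul_pos hd₁ hd₂) hΔ,
      mul_nonneg (mul_nonneg hη huv.le) hΔ.le]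
  set s := Real.sqrt (ρ₁ ^ 2 - c ^ 2 * ρ₂) with hs
  have hs0 : 0 ≤ s := Real.sqrt_nonneg _
  have hs2 : s ^ 2 = ρ₁ ^ 2 - c ^ 2 * ρ₂ := Real.sq_sqrt hD.le
  have hsp : 0 < s := Real.sqrt_pos.mpr hD
  have hρ₁pos : 0 < ρ₁ := by nlinarith [mul_pos hc hβ, mul_nonneg (mul_nonneg (mul_nonneg hη hu.le) hv.le) hΔ.le]
  have hsltρ₁ : s < ρ₁ := by
    nlinarith [mul_pos (mul_pos hc hc) hρ₂]
  have hξcpos : 0 < ξc := by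
    rw [hξc]
    apply div_pos (by linarith) (by positivity)
  -- ξc < β / c, i.e. c * ξc < β : ρ₁ - s < c * β, i.e. ρ₁ - c*β < s
  have hkey : c * (2 * ρ₁ * β - c * β ^ 2 - c * ρ₂) > 0 := by
    have : 2 * ρ₁ * β - c * β ^ 2 - c * ρ₂
        = 4 * η * ustar * vstar * Δ * β + 4 * c * (d₁ * d₂ * Δ) := by
      rw [hρ₁, hρ₂_def]; ring
    rw [this]
    have : 0 < 4 * η * ustar * vstar * Δ * β + 4 * c * (d₁ * d₂ * Δ) := by
      have h1 : 0 ≤ 4 * η * ustar * vstar * Δ * β := by positivity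
      have h2 : 0 < 4 * c * (d₁ * d₂ * Δ) := by positivity
      linarith
    positivity
  clear htr hΔ_def hc_def hβ_def
  clear a₁₁ a₁₂ a₂₁ a₂₂
  have hρ₁cβ : ρ₁ - c * β < s := by
    have hn : ρ₁ - c * β ≥ 0 := by
      rw [hρ₁]; nlinarith [mul_nonneg (mul_nonneg (mul_nonneg hη hu.le) hv.le) hΔ.le]
    have ht2 : s ^ 2 - (ρ₁ - c * β) ^ 2 = c * (2 * ρ₁ * β - c * β ^ 2 - c * ρ₂) := by
      rw [hs2]; ring
    have ht3 : (ρ₁ - c * β) ^ 2 < s ^ 2 := by linarith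
    nlinarith
  constructor
  · -- instability branch
    intro ξ hξ0 hξlt
    have hA : 0 < d₁ * d₂ + ξ * η * ustar * vstar := by positivity
    set A := d₁ * d₂ + ξ * η * ustar * vstar with hA_def
    -- c^2 ξ < ρ₁ - s
    have hlt : c ^ 2 * ξ < ρ₁ - s := by
      have := hξlt
      rw [hξc] at this
      have hc2 : (0:ℝ) < c ^ 2 := by positivity
      calc c ^ 2 * ξ < c ^ 2 * ((ρ₁ - s) / c ^ 2) := by
            exact (mul_lt_mul_iff_right₀ hc2).mpr this
        _ = ρ₁ - s := by field_simp
    -- B > 0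
    have hB : 0 < β - c * ξ := by
      -- c * ξ ≤ c^2 ξ / c < (ρ₁ - s)/c < β  since ρ₁ - s < c β
      have h1 : c ^ 2 * ξ < c * β := by nlinarith
      nlinarith
    -- discriminant g(ξ) > 0 : c²ξ² - 2ρ₁ξ + ρ₂ > 0
    have hg : 0 < c ^ 2 * ξ ^ 2 - 2 * ρ₁ * ξ + ρ₂ := by
      have h1 : s < ρ₁ - c ^ 2 * ξ := by linarith
      have h2 : s ^ 2 < (ρ₁ - c ^ 2 * ξ) ^ 2 := by nlinarith
      have hc2 : (0:ℝ) < c ^ 2 := by positivity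
      nlinarith
    -- the discriminant identity
    have hdisc : (β - c * ξ) ^ 2 - 4 * A * Δ = c ^ 2 * ξ ^ 2 - 2 * ρ₁ * ξ + ρ₂ := by
      rw [hA_def, hρ₁, hρ₂_def]; ring
    refine ⟨(β - c * ξ) / (2 * A), by positivity, ?_⟩
    have hval : A * ((β - c * ξ) / (2 * A)) ^ 2 - (β - c * ξ) * ((β - c * ξ) / (2 * A)) + Δ
        = (4 * A * Δ - (β - c * ξ) ^ 2) / (4 * A) := by
      field_simp; ring
    simp only
    rw [hval]
    apply div_neg_of_neg_of_pos _ (by positivity)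
    nlinarith
  · -- stability branch
    intro ξ hξgt x hx
    have hξpos : 0 < ξ := lt_trans hξcpos hξgt
    have hA : 0 < d₁ * d₂ + ξ * η * ustar * vstar := by positivity
    set A := d₁ * d₂ + ξ * η * ustar * vstar with hA_def
    simp only
    rcases le_or_gt (β - c * ξ) 0 with hB | hB
    · have h1 : 0 ≤ A * x ^ 2 := by positivity
      nlinarith [mul_nonneg (neg_nonneg.mpr hB) hx]
    · -- B > 0 ⇒ ξ is between the two roots of g ⇒ g(ξ) < 0
      have hgt : ρ₁ - s < c ^ 2 * ξ := by
        have := hξgt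
        rw [hξc] at this
        have hc2 : (0:ℝ) < c ^ 2 := by positivity
        calc ρ₁ - s = c ^ 2 * ((ρ₁ - s) / c ^ 2) := by field_simp
          _ < c ^ 2 * ξ := (mul_lt_mul_iff_right₀ hc2).mpr this
      have hub : c ^ 2 * ξ < ρ₁ + s := by
        have h1 : c * ξ < β := by nlinarith
        have h2 : c * β ≤ ρ₁ := by
          rw [hρ₁]; nlinarith [mul_nonneg (mul_nonneg (mul_nonneg hη hu.le) hv.le) hΔ.le]
        nlinarith
      have hg : c ^ 2 * ξ ^ 2 - 2 * ρ₁ * ξ + ρ₂ < 0 := by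
        have h2 : (c ^ 2 * ξ - ρ₁) ^ 2 < s ^ 2 :=
          sq_lt_sq' (by linarith) (by linarith)
        have hc2 : (0:ℝ) < c ^ 2 := by positivity
        have hid : c ^ 2 * (c ^ 2 * ξ ^ 2 - 2 * ρ₁ * ξ + ρ₂)
            = (c ^ 2 * ξ - ρ₁) ^ 2 - s ^ 2 := by rw [hs2]; ring
        nlinarith [hid, h2, hc2]
      have hdisc : (β - c * ξ) ^ 2 - 4 * A * Δ = c ^ 2 * ξ ^ 2 - 2 * ρ₁ * ξ + ρ₂ := by
        rw [hA_def, hρ₁, hρ₂_def]; ring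
      have h4 : 0 < 4 * A * Δ - (β - c * ξ) ^ 2 := by linarith
      rw [← hA_def]
      nlinarith [sq_nonneg (2 * A * x - (β - c * ξ)), h4, hA]
end
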